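/- In the group algebra kQ_{4t} over a field of characteristic 2 with t ≥ 4 a power of 2, the element u = c a^{2t-2} + b a^{2t-3} satisfies au = a^{2t-2}b + a^{2t-1}, cu = a^{2t-2}b + a^{2t-1}, ua = a^{2t-2}b + N, and ub = a^{2t-2}b, where a = g+1, b = h+1, c = hg+1 and N is the norm element. -/

import Mathlib

/-!
Put `a = g + 1`. In characteristic 2, with `t` a power of 2, `a ^ t = g ^ t + 1`, hence
`a ^ (2t) = g ^ (2t) + 1 = 0` and `a ^ (2t - 1) = ∑ g ^ i`, so that `N = b a ^ (2t - 1)`.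
All four products then lie in the span of `q = a ^ (2t-3)`, `p = a ^ (2t-2)`, `s = a ^ (2t-1)`
and `h q`, `h p`, `h s`, where the multiplication table is explicit: `g` acts by
`g a ^ j = a ^ (j+1) + a ^ j`, `h ^ 2 = g ^ t = 1 + a ^ t` acts trivially, and the relation
`g h g = h` moves `a ^ j` past `h` at the cost of a factor `g ^ (2t - j)`.
-/

open MonoidAlgebra QuaternionGroup Finset

section CharTwo

variable {R : Type*} [Ring R] [CharP R 2]

theorem add_one_pow_two_pow (x : R) (m : ℕ) : (x + 1) ^ 2 ^ m = x ^ 2 ^ m + 1 := by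
  have : Fact (Nat.Prime 2) := ⟨Nat.prime_two⟩
  rw [add_pow_char_pow_of_commute 2 m (Commute.one_right x), one_pow]

theorem add_one_pow_two_pow_sub_one (x : R) (m : ℕ) :
    (x + 1) ^ (2 ^ m - 1) = ∑ i ∈ range (2 ^ m), x ^ i := by
  induction m with
  | zero => simp
  | succ m ih =>
    have hm : 2 ^ (m + 1) - 1 = 2 ^ m + (2 ^ m - 1) := by
      have := Nat.one_le_two_pow (n := m); rw [pow_succ]; omega
    rw [hm, pow_add, ih, add_one_pow_two_pow, pow_succ, mul_two, sum_range_add, add_mul, one_mul,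
      mul_sum, add_comm]
    simp_rw [← pow_add]

theorem mul_add_one_pow (x : R) (j : ℕ) : x * (x + 1) ^ j = (x + 1) ^ (j + 1) + (x + 1) ^ j := by
  rw [pow_succ', ← add_one_mul, add_assoc, one_add_one_eq_two, CharTwo.two_eq_zero, add_zero]

end CharTwo

section Twist

variable {R : Type*} [Ring R] {g h : R}

theorem mul_add_one_pow_of_mul_mul_eq (hghg : g * h * g = h) (j : ℕ) :
    h * (g + 1) ^ j = (g + 1) ^ j * h * g ^ j := by
  have hcomm : Commute (g + 1) g := (Commute.refl g).add_left (Commute.one_left g)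
  have hbase : h * (g + 1) = (g + 1) * h * g := by
    rw [mul_add_one, add_mul, add_mul, hghg, one_mul, add_comm]
  induction j with
  | zero => simp
  | succ j ih =>
    calc h * (g + 1) ^ (j + 1) = (g + 1) ^ j * h * (g ^ j * (g + 1)) := by
          rw [pow_succ, ← mul_assoc, ih, mul_assoc _ (g ^ j)]
      _ = (g + 1) ^ j * (h * (g + 1)) * g ^ j := by
          rw [← (hcomm.pow_right j).eq]; simp only [mul_assoc]
      _ = (g + 1) ^ (j + 1) * h * g ^ (j + 1) := by
          rw [hbase, pow_succ, pow_succ']; simp only [mul_assoc]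

theorem add_one_pow_mul_of_mul_mul_eq {n j : ℕ} (hghg : g * h * g = h) (hg : g ^ n = 1)
    (hj : j ≤ n) : (g + 1) ^ j * h = h * (g ^ (n - j) * (g + 1) ^ j) := by
  have hcomm : Commute (g ^ (n - j)) ((g + 1) ^ j) :=
    ((Commute.refl g).add_right (Commute.one_right g)).pow_pow _ _
  rw [hcomm.eq, ← mul_assoc, mul_add_one_pow_of_mul_mul_eq hghg, mul_assoc, ← pow_add,
    Nat.add_sub_cancel' hj, hg, mul_one]

theorem mul_mul_eq_of_mul_eq (hghg : g * h * g = h) {y z : R} (hz : g * z = y) :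
    g * (h * y) = h * z := by
  rw [← hz, ← mul_assoc, ← mul_assoc, hghg]

end Twist

section QuaternionRelations

variable {R : Type*} [Ring R] [CharP R 2] {g h : R}

theorem add_one_pow_two_mul_eq_zero {t : ℕ} (hg : g ^ (2 * t) = 1)
    (hgt : (g + 1) ^ t = g ^ t + 1) : (g + 1) ^ (2 * t) = 0 := by
  have hsq := add_one_pow_two_pow (g ^ t) 1
  rwa [pow_one, ← hgt, ← pow_mul, ← pow_mul, mul_comm t, hg, CharTwo.add_self_eq_zero] at hsq

theorem mul_mul_add_one_pow_of_le {t i : ℕ} (hh : h * h = g ^ t) (hgt : (g + 1) ^ t = g ^ t + 1)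
    (hnil : (g + 1) ^ (2 * t) = 0) (hi : t ≤ i) : h * (h * (g + 1) ^ i) = (g + 1) ^ i := by
  have hvan : (g + 1) ^ t * (g + 1) ^ i = 0 := by
    rw [← pow_add, ← Nat.add_sub_cancel' (by omega : 2 * t ≤ t + i), pow_add, hnil, zero_mul]
  rw [← mul_assoc, hh, ← CharTwo.add_cancel_right (g ^ t) 1, ← hgt, add_one_mul, hvan, zero_add]

theorem mul_identities_of_quaternion_relations {t : ℕ} (ht : 3 ≤ t) (hg : g ^ (2 * t) = 1)
    (hghg : g * h * g = h) (hh : h * h = g ^ t) (hgt : (g + 1) ^ t = g ^ t + 1)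
    {a b c u : R} (ha : a = g + 1) (hb : b = h + 1) (hc : c = h * g + 1)
    (hu : u = c * a ^ (2 * t - 2) + b * a ^ (2 * t - 3)) :
    a * u = a ^ (2 * t - 2) * b + a ^ (2 * t - 1) ∧
    c * u = a ^ (2 * t - 2) * b + a ^ (2 * t - 1) ∧
    u * a = a ^ (2 * t - 2) * b + b * a ^ (2 * t - 1) ∧
    u * b = a ^ (2 * t - 2) * b := by
  have hnil := add_one_pow_two_mul_eq_zero hg hgt
  have hcomm (i : ℕ) : Commute g ((g + 1) ^ i) :=
    ((Commute.refl g).add_right (Commute.one_right g)).pow_right i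
  subst ha hb hc hu
  set s := (g + 1) ^ (2 * t - 1)
  set p := (g + 1) ^ (2 * t - 2)
  set q := (g + 1) ^ (2 * t - 3) with hq
  have gs : g * s = s := by
    rw [mul_add_one_pow, Nat.sub_add_cancel (by omega), hnil, zero_add]
  have gp : g * p = s + p := by
    rw [mul_add_one_pow, show 2 * t - 2 + 1 = 2 * t - 1 by omega]
  have gq : g * q = p + q := by
    rw [mul_add_one_pow, show 2 * t - 3 + 1 = 2 * t - 2 by omega]
  have sg : s * g = s := (hcomm _).eq.symm.trans gs
  have pg : p * g = s + p := (hcomm _).eq.symm.trans gp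
  have qg : q * g = p + q := (hcomm _).eq.symm.trans gq
  have ghs : g * (h * s) = h * s := mul_mul_eq_of_mul_eq hghg gs
  have ghp : g * (h * p) = h * (s + p) :=
    mul_mul_eq_of_mul_eq hghg (by rw [mul_add, gs, gp, CharTwo.add_cancel_left])
  have ghq : g * (h * q) = h * (s + p + q) :=
    mul_mul_eq_of_mul_eq hghg (by
      simp only [mul_add, gs, gp, gq, add_assoc, add_left_comm, CharTwo.add_cancel_left])
  have sh : s * h = h * s := by
    rw [add_one_pow_mul_of_mul_mul_eq hghg hg (by omega), show 2 * t - (2 * t - 1) = 1 by omega,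
      pow_one, gs]
  have ph : p * h = h * p := by
    rw [add_one_pow_mul_of_mul_mul_eq hghg hg (by omega), show 2 * t - (2 * t - 2) = 2 by omega,
      sq, mul_assoc, gp, mul_add, gs, gp, CharTwo.add_cancel_left]
  have qh : q * h = h * (s + p + q) := by
    rw [add_one_pow_mul_of_mul_mul_eq hghg hg (by omega), show 2 * t - (2 * t - 3) = 3 by omega,
      pow_succ, sq, ← hq]
    simp only [mul_assoc, mul_add, gs, gp, gq, add_assoc, add_left_comm,
      CharTwo.add_cancel_left]
  have hhs : h * (h * s) = s := mul_mul_add_one_pow_of_le hh hgt hnil (by omega)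
  have hhp : h * (h * p) = p := mul_mul_add_one_pow_of_le hh hgt hnil (by omega)
  have hhq : h * (h * q) = q := mul_mul_add_one_pow_of_le hh hgt hnil (by omega)
  refine ⟨?_, ?_, ?_, ?_⟩ <;>
  · simp only [mul_add, add_mul, mul_assoc, one_mul, mul_one, gp, gq, sg, pg, qg, ghs, ghp, ghq,
      sh, ph, qh, hhs, hhp, hhq]
    simp only [add_assoc, add_left_comm, add_comm, CharTwo.add_cancel_left,
      CharTwo.add_self_eq_zero, zero_add]

end QuaternionRelations

theorem ZMod.sum_univ_eq_sum_range {n : ℕ} [NeZero n] {M : Type*} [AddCommMonoid M]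
    (f : ZMod n → M) : ∑ i, f i = ∑ i ∈ range n, f i :=
  sum_nbij' ZMod.val Nat.cast (fun i _ => mem_range.2 (ZMod.val_lt i)) (fun _ _ => mem_univ _)
    (fun i _ => ZMod.natCast_zmod_val i) (fun _ hi => ZMod.val_cast_of_lt (mem_range.1 hi))
    (fun i _ => by rw [ZMod.natCast_zmod_val])

namespace QuaternionGroup

theorem a_mul_xa_mul_a {n : ℕ} (i j : ZMod (2 * n)) : a i * xa j * a i = xa j := by
  rw [a_mul_xa, xa_mul_a, sub_add_cancel]

theorem sum_univ {n : ℕ} [NeZero n] {M : Type*} [AddCommMonoid M] (f : QuaternionGroup n → M) :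
    ∑ x, f x = ∑ i, f (a i) + ∑ i, f (xa i) := by
  let e : ZMod (2 * n) ⊕ ZMod (2 * n) ≃ QuaternionGroup n :=
    { toFun := Sum.elim a xa
      invFun := fun | a i => .inl i | xa i => .inr i
      left_inv := by rintro (i | i) <;> rfl
      right_inv := by rintro (i | i) <;> rfl }
  rw [← e.sum_comp, Fintype.sum_sum_type]
  rfl

theorem sum_of_eq_mul_add_one_pow {k : Type*} [CommRing k] [CharP k 2] {m : ℕ}
    [NeZero (2 ^ m)] :
    ∑ x : QuaternionGroup (2 ^ m), of k _ x =
      (of k _ (xa 0) + 1) * (of k _ (a 1) + 1) ^ (2 * 2 ^ m - 1) := by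
  have : CharP (MonoidAlgebra k (QuaternionGroup (2 ^ m))) 2 := charP_of_injective_algebraMap' k 2
  have hgeom := add_one_pow_two_pow_sub_one (of k (QuaternionGroup (2 ^ m)) (a 1)) (m + 1)
  rw [pow_succ' 2 m] at hgeom
  rw [hgeom, add_one_mul, sum_univ, mul_sum, add_comm, ZMod.sum_univ_eq_sum_range,
    ZMod.sum_univ_eq_sum_range]
  congr 1 <;> refine sum_congr rfl fun i _ => ?_
  · rw [← map_pow, a_one_pow, ← map_mul, xa_mul_a, zero_add]
  · rw [← map_pow, a_one_pow]

end QuaternionGroup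

/-- for `t ≥ 4`, `u = c a^{2t-2} + b a^{2t-3}` satisfies
`au = a^{2t-2}b + a^{2t-1}`, `cu = a^{2t-2}b + a^{2t-1}`, `ua = a^{2t-2}b + N`,
`ub = a^{2t-2}b`. -/
theorem stmt_8 (k : Type*) [Field k] [CharP k 2] (t : ℕ) (ht : 4 ≤ t)
    (hpow : ∃ m : ℕ, t = 2 ^ m) [NeZero t]
    (g h : MonoidAlgebra k (QuaternionGroup t))
    (hg : g = of k (QuaternionGroup t) (QuaternionGroup.a 1))
    (hh : h = of k (QuaternionGroup t) (QuaternionGroup.xa 0))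
    (a b c N u : MonoidAlgebra k (QuaternionGroup t))
    (ha : a = g + 1) (hb : b = h + 1) (hc : c = h * g + 1)
    (hN : N = ∑ j : QuaternionGroup t, of k (QuaternionGroup t) j)
    (hu : u = c * a ^ (2 * t - 2) + b * a ^ (2 * t - 3)) :
    a * u = a ^ (2 * t - 2) * b + a ^ (2 * t - 1) ∧
    c * u = a ^ (2 * t - 2) * b + a ^ (2 * t - 1) ∧
    u * a = a ^ (2 * t - 2) * b + N ∧
    u * b = a ^ (2 * t - 2) * b := by
  obtain ⟨m, rfl⟩ := hpow
  have : CharP (MonoidAlgebra k (QuaternionGroup (2 ^ m))) 2 := charP_of_injective_algebraMap' k 2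
  subst hg hh
  rw [hN, sum_of_eq_mul_add_one_pow, ← ha, ← hb]
  refine mul_identities_of_quaternion_relations (by omega) ?_ ?_ ?_ (add_one_pow_two_pow _ m)
    ha hb hc hu
  · rw [← map_pow, a_one_pow_n, map_one]
  · rw [← map_mul, ← map_mul, a_mul_xa_mul_a]
  · rw [← map_mul, ← map_pow, ← sq, xa_sq, a_one_pow]
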